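/- arXiv:math/0612053 — 3 statements merged into one kernel-verified Lean document; each statement's English description precedes it below -/
import Mathlib

section
/- Let X, Y ∈ Γ(AG). The unique map λ : D(2) → B(G) that coincides on the two axes of D(2) with d ↦ X_d and d′ ↦ Y_{d′} respectively is given by λ(d,d′) = X_d ∗ Y_{d′} = Y_{d′} ∗ X_d. Consequently, the tangent-vector sum satisfies (X + Y)_d = X_d ∗ Y_d = Y_d ∗ X_d for all d ∈ D. -/
/-- The set `D = {d ∈ R | d² = 0}` of square-zero infinitesimals. -/
def Dinf (R : Type*) [CommRing R] : Type _ := {d : R // d * d = 0}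

variable {R : Type*} [CommRing R]

/-- `0 ∈ D`. -/
def d0 : Dinf R := ⟨0, by simp⟩

/-!
Microlinearity says a map on `D(2)` is determined by its restrictions to the two axes. Both
`(d, d') ↦ X_d ∗ Y_{d'}` and `(d, d') ↦ Y_{d'} ∗ X_d` restrict to `X` and `Y` there, because
`X_0 = Y_0 = id` is the unit of `B(G)`; hence both equal `λ`, and `(X + Y)_d = λ(d, d)`.
-/

abbrev D2 (R : Type*) [CommRing R] : Type _ := {p : Dinf R × Dinf R // p.1.1 * p.2.1 = 0}

namespace D2

def axis1 (d : Dinf R) : D2 R := ⟨(d, d0), by simp [d0]⟩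

def axis2 (d : Dinf R) : D2 R := ⟨(d0, d), by simp [d0]⟩

theorem eq_op_of_axes {M : Type*}
    (ext_axes : ∀ f g : D2 R → M, (∀ d, f (axis1 d) = g (axis1 d)) →
      (∀ d, f (axis2 d) = g (axis2 d)) → f = g)
    {e : M} (op : M → M → M) (op_e_right : ∀ a, op a e = a) (op_e_left : ∀ b, op e b = b)
    {X Y : Dinf R → M} (hX : X d0 = e) (hY : Y d0 = e)
    {lam : D2 R → M} (hlX : ∀ d, lam (axis1 d) = X d) (hlY : ∀ d, lam (axis2 d) = Y d) :
    lam = fun p => op (X p.1.1) (Y p.1.2) :=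
  ext_axes _ _ (fun d => show lam (axis1 d) = op (X d) (Y d0) by rw [hlX, hY, op_e_right])
    (fun d => show lam (axis2 d) = op (X d0) (Y d) by rw [hlY, hX, op_e_left])

end D2

/-- in the synthetic setting, with `B = B(G)` a microlinear group
(microlinearity used through the hypothesis `hml2`: two maps on `D(2)` agreeing on
the axes coincide) and `X, Y ∈ Γ(AG)` regarded as tangent vectors `d ↦ X_d`,
`d ↦ Y_d` to `B(G)` at `id`, the unique map `λ : D(2) → B(G)` agreeing with `X`
and `Y` on the two axes is given by `λ(d,d′) = X_d ∗ Y_{d′} = Y_{d′} ∗ X_d`;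
consequently `(X+Y)_d = λ(d,d) = X_d ∗ Y_d = Y_d ∗ X_d` for all `d ∈ D`. -/
theorem sum_of_tangent_vectors
    (R : Type*) [CommRing R] (B : Type*) [Group B]
    (hml2 : ∀ f g : {p : Dinf R × Dinf R // p.1.1 * p.2.1 = 0} → B,
      (∀ d : Dinf R, f ⟨(d, d0), by simp [d0]⟩ = g ⟨(d, d0), by simp [d0]⟩) →
      (∀ d : Dinf R, f ⟨(d0, d), by simp [d0]⟩ = g ⟨(d0, d), by simp [d0]⟩) → f = g)
    (X Y : Dinf R → B) (hX : X d0 = 1) (hY : Y d0 = 1)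
    (lam : {p : Dinf R × Dinf R // p.1.1 * p.2.1 = 0} → B)
    (hlX : ∀ d : Dinf R, lam ⟨(d, d0), by simp [d0]⟩ = X d)
    (hlY : ∀ d : Dinf R, lam ⟨(d0, d), by simp [d0]⟩ = Y d) :
    (∀ p : {p : Dinf R × Dinf R // p.1.1 * p.2.1 = 0},
      lam p = X p.1.1 * Y p.1.2 ∧ lam p = Y p.1.2 * X p.1.1) ∧
    (∀ d : Dinf R, lam ⟨(d, d), d.2⟩ = X d * Y d ∧ lam ⟨(d, d), d.2⟩ = Y d * X d) := by
  have hXY : lam = fun p => X p.1.1 * Y p.1.2 :=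
    D2.eq_op_of_axes hml2 (· * ·) mul_one one_mul hX hY hlX hlY
  have hYX : lam = fun p => Y p.1.2 * X p.1.1 :=
    D2.eq_op_of_axes hml2 (fun a b => b * a) one_mul mul_one hX hY hlX hlY
  exact ⟨fun p => ⟨congrFun hXY p, congrFun hYX p⟩,
    fun d => ⟨congrFun hXY ⟨(d, d), d.2⟩, congrFun hYX ⟨(d, d), d.2⟩⟩⟩
end

section
/- Let X, Y ∈ Γ(AG). The map (d₁,d₂) ∈ D² ↦ Y_{−d₂} ∗ X_{−d₁} ∗ Y_{d₂} ∗ X_{d₁} ∈ B(G) restricts to the constant id on both axes: it equals id whenever d₁ = 0 or d₂ = 0. Hence there is a unique element [X,Y] ∈ Γ(AG) with [X,Y]_{d₁d₂} = Y_{−d₂} ∗ X_{−d₁} ∗ Y_{d₂} ∗ X_{d₁} for all d₁, d₂ ∈ D. -/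
variable {R : Type*} [CommRing R]

/-- `-d ∈ D` for `d ∈ D`. -/
def dneg (d : Dinf R) : Dinf R := ⟨-d.1, by rw [neg_mul_neg, d.2]⟩

/-- `d₁·d₂ ∈ D` for `d₁, d₂ ∈ D`. -/
def dmul (d e : Dinf R) : Dinf R := ⟨d.1 * e.1, by rw [mul_mul_mul_comm, d.2, zero_mul]⟩

/-- for `X, Y ∈ Γ(AG)` (tangent vectors at `id` to the microlinear group
`B(G)` of bisections, satisfying the inverse law `(X_d)⁻¹ = X_{-d}`), the map
`(d₁,d₂) ↦ Y_{-d₂} ∗ X_{-d₁} ∗ Y_{d₂} ∗ X_{d₁}` is the constant `id` on both axes;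
hence, by the factorization property of microlinear objects (hypothesis `hfact`,
Lavendhomme §2.3 Prop. 3), there is a unique `[X,Y] ∈ Γ(AG)` with
`[X,Y]_{d₁d₂} = Y_{-d₂} ∗ X_{-d₁} ∗ Y_{d₂} ∗ X_{d₁}` for all `d₁, d₂ ∈ D`. -/
theorem lie_bracket_exists
    (R : Type*) [CommRing R] (B : Type*) [Group B]
    (hfact : ∀ f : Dinf R → Dinf R → B,
      (∀ d : Dinf R, f d d0 = 1) → (∀ d : Dinf R, f d0 d = 1) →
      ∃! t : Dinf R → B, t d0 = 1 ∧ ∀ d₁ d₂ : Dinf R, f d₁ d₂ = t (dmul d₁ d₂))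
    (X Y : Dinf R → B) (hX : X d0 = 1) (hY : Y d0 = 1)
    (hXinv : ∀ d : Dinf R, X (dneg d) * X d = 1)
    (hYinv : ∀ d : Dinf R, Y (dneg d) * Y d = 1) :
    (∀ d : Dinf R, Y (dneg d0) * X (dneg d) * Y d0 * X d = 1) ∧
    (∀ d : Dinf R, Y (dneg d) * X (dneg d0) * Y d * X d0 = 1) ∧
    ∃! t : Dinf R → B, t d0 = 1 ∧
      ∀ d₁ d₂ : Dinf R, Y (dneg d₂) * X (dneg d₁) * Y d₂ * X d₁ = t (dmul d₁ d₂) := by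
  have hnd0 : (dneg d0 : Dinf R) = d0 := by
    simp [dneg, d0]
    rfl
  have h1 : ∀ d : Dinf R, Y (dneg d0) * X (dneg d) * Y d0 * X d = 1 := by
    intro d
    rw [hnd0, hY]
    simpa using hXinv d
  have h2 : ∀ d : Dinf R, Y (dneg d) * X (dneg d0) * Y d * X d0 = 1 := by
    intro d
    rw [hnd0, hX]
    simpa using hYinv d
  refine ⟨h1, h2, ?_⟩
  exact hfact (fun d₁ d₂ => Y (dneg d₂) * X (dneg d₁) * Y d₂ * X d₁) h1 h2
end

section
/- For any a ∈ R and X, Y ∈ Γ(AG), the Lie bracket satisfies [aX, Y] = a[X,Y], where (aX)_d = X_{ad} and (a[X,Y])_d = [X,Y]_{ad}. -/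
variable {R : Type*} [CommRing R]

/-- `a·d ∈ D` for `a ∈ R`, `d ∈ D`. -/
def dsmul (a : R) (d : Dinf R) : Dinf R := ⟨a * d.1, by rw [mul_mul_mul_comm, d.2, mul_zero]⟩

/-- for `a ∈ R` and `X, Y ∈ Γ(AG)`, `[aX, Y] = a[X,Y]`, where
`(aX)_d = X_{ad}` and `(a[X,Y])_d = [X,Y]_{ad}`.  Here `bXY` and `baXY` are the
(unique, by the microlinearity hypothesis `huniq`) tangent vectors representing the
commutator maps of `(X,Y)` and `(aX,Y)` respectively. -/
theorem bracket_homogeneous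
    (R : Type*) [CommRing R] (B : Type*) [Group B]
    (huniq : ∀ t t' : Dinf R → B, t d0 = 1 → t' d0 = 1 →
      (∀ d₁ d₂ : Dinf R, t (dmul d₁ d₂) = t' (dmul d₁ d₂)) → t = t')
    (a : R) (X Y : Dinf R → B) (hX : X d0 = 1) (hY : Y d0 = 1)
    (bXY : Dinf R → B) (hbXY0 : bXY d0 = 1)
    (hbXY : ∀ d₁ d₂ : Dinf R,
      bXY (dmul d₁ d₂) = Y (dneg d₂) * X (dneg d₁) * Y d₂ * X d₁)
    (baXY : Dinf R → B) (hbaXY0 : baXY d0 = 1)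
    (hbaXY : ∀ d₁ d₂ : Dinf R,
      baXY (dmul d₁ d₂) =
        Y (dneg d₂) * X (dsmul a (dneg d₁)) * Y d₂ * X (dsmul a d₁)) :
    baXY = fun d => bXY (dsmul a d) := by
  have h0 : dsmul (R := R) a d0 = d0 := by
    simp [dsmul, d0]
    rfl
  apply huniq _ _ hbaXY0 (by simp [h0, hbXY0])
  intro d₁ d₂
  have h1 : dsmul a (dmul d₁ d₂) = dmul (dsmul a d₁) d₂ := by
    simp [dsmul, dmul, mul_assoc]
    rfl
  have h2 : dneg (dsmul a d₁) = dsmul a (dneg d₁) := by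
    simp [dneg, dsmul]
    rfl
  rw [hbaXY, h1, hbXY, h2]
end
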